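/- Let n ≥ 1 and l, a, b ≥ 0 be integers with 2l ≤ a + b − 1. Let f, g : ℝⁿ → ℂ be measurable functions with ⟨x⟩^{max(2l, a−1)} f ∈ L¹(ℝⁿ) and ⟨x⟩^{max(2l, b−1)} g ∈ L¹(ℝⁿ). If ∫_{ℝⁿ} x^α f(x) dx = 0 for every multi-index α with |α| ≤ a−1, and ∫_{ℝⁿ} x^β g(x) dx = 0 for every multi-index β with |β| ≤ b−1, then ∫_{ℝⁿ}∫_{ℝⁿ} |x−y|^{2l} f(x) g(y) dx dy = 0 (the double integral being absolutely convergent). -/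

import Mathlib

/-!
Expanding `‖x - y‖^(2l) = (∑ᵢ (xᵢ - yᵢ)²)^l` gives a sum of terms `c x^α y^β` with
`|α| + |β| = 2l < a + b`, so each term has `|α| < a` or `|β| < b`. Its double integral against
`f(x) g(y)` factors as `c (∫ x^α f) (∫ y^β g)`, where one factor is a vanishing moment.
Absolute convergence comes from `‖x - y‖ ≤ ⟨x⟩⟨y⟩`.
-/

open MeasureTheory MvPolynomial

section JapaneseBracket

variable {E : Type*} [SeminormedAddCommGroup E]

lemma one_le_sqrt_one_add_norm_sq (x : E) : 1 ≤ √(1 + ‖x‖ ^ 2) :=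
  Real.one_le_sqrt.mpr (by linarith [sq_nonneg ‖x‖])

lemma norm_le_sqrt_one_add_norm_sq (x : E) : ‖x‖ ≤ √(1 + ‖x‖ ^ 2) :=
  Real.le_sqrt_of_sq_le (by linarith)

-- `(‖x‖ + ‖y‖)² ≤ (1 + ‖x‖²)(1 + ‖y‖²)` is `0 ≤ (‖x‖‖y‖ - 1)²`.
lemma norm_sub_le_sqrt_one_add_norm_sq_mul (x y : E) :
    ‖x - y‖ ≤ √(1 + ‖x‖ ^ 2) * √(1 + ‖y‖ ^ 2) := by
  rw [← Real.sqrt_mul (by positivity)]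
  refine Real.le_sqrt_of_sq_le ?_
  have h := norm_sub_le x y
  nlinarith [mul_le_mul h h (norm_nonneg _) (by positivity), sq_nonneg (‖x‖ * ‖y‖ - 1)]

end JapaneseBracket

lemma norm_prod_pow_le_sqrt_one_add_norm_sq_pow {ι : Type*} [Fintype ι]
    (x : EuclideanSpace ℝ ι) (α : ι → ℕ) :
    ‖∏ i, (x i : ℂ) ^ α i‖ ≤ √(1 + ‖x‖ ^ 2) ^ ∑ i, α i := by
  rw [norm_prod, ← Finset.prod_pow_eq_pow_sum]
  refine Finset.prod_le_prod (fun i _ => by positivity) fun i _ => ?_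
  rw [norm_pow, Complex.norm_real]
  exact pow_le_pow_left₀ (norm_nonneg _)
    ((PiLp.norm_apply_le x i).trans (norm_le_sqrt_one_add_norm_sq x)) _

lemma integrable_prod_pow_mul {ι : Type*} [Fintype ι] {μ : Measure (EuclideanSpace ℝ ι)}
    {f : EuclideanSpace ℝ ι → ℂ} {M : ℕ}
    (hf : Integrable (fun x => √(1 + ‖x‖ ^ 2) ^ M • f x) μ) (hfm : AEStronglyMeasurable f μ)
    {α : ι → ℕ} (hα : ∑ i, α i ≤ M) :
    Integrable (fun x => (∏ i, (x i : ℂ) ^ α i) * f x) μ := by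
  have hmon : Continuous fun x : EuclideanSpace ℝ ι => ∏ i, (x i : ℂ) ^ α i := by fun_prop
  refine hf.norm.mono' (hmon.aestronglyMeasurable.mul hfm) (ae_of_all _ fun x => ?_)
  rw [norm_mul, norm_smul, Real.norm_of_nonneg (by positivity)]
  gcongr
  exact (norm_prod_pow_le_sqrt_one_add_norm_sq_pow x α).trans
    (pow_le_pow_right₀ (one_le_sqrt_one_add_norm_sq x) hα)

section Integrability

variable {E F : Type*} [NormedAddCommGroup E] [MeasurableSpace E] [BorelSpace E]
  [SecondCountableTopology E] [NormedAddCommGroup F] [NormedSpace ℝ F]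
  {μ ν : Measure E}

lemma integrable_norm_sub_pow_mul_norm_mul_norm {f g : E → F} {k M N : ℕ}
    (hkM : k ≤ M) (hkN : k ≤ N)
    (hf : Integrable (fun x => √(1 + ‖x‖ ^ 2) ^ M • f x) μ)
    (hg : Integrable (fun y => √(1 + ‖y‖ ^ 2) ^ N • g y) ν)
    (hfm : AEStronglyMeasurable f μ) (hgm : AEStronglyMeasurable g ν) :
    Integrable (fun p : E × E => ‖p.1 - p.2‖ ^ k * ‖f p.1‖ * ‖g p.2‖) (μ.prod ν) := by
  have hmeas : AEStronglyMeasurable (fun p : E × E => ‖p.1 - p.2‖ ^ k * ‖f p.1‖ * ‖g p.2‖)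
      (μ.prod ν) :=
    ((continuous_fst.sub continuous_snd).norm.pow k).aestronglyMeasurable.mul
      hfm.norm.comp_fst |>.mul hgm.norm.comp_snd
  refine (hf.norm.mul_prod hg.norm).mono' hmeas (ae_of_all _ fun p => ?_)
  simp only [norm_mul, norm_pow, norm_norm, norm_smul, Real.norm_of_nonneg (Real.sqrt_nonneg _)]
  calc ‖p.1 - p.2‖ ^ k * ‖f p.1‖ * ‖g p.2‖
      ≤ (√(1 + ‖p.1‖ ^ 2) * √(1 + ‖p.2‖ ^ 2)) ^ k * ‖f p.1‖ * ‖g p.2‖ := by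
        gcongr; exact norm_sub_le_sqrt_one_add_norm_sq_mul _ _
    _ = (√(1 + ‖p.1‖ ^ 2) ^ k * ‖f p.1‖) * (√(1 + ‖p.2‖ ^ 2) ^ k * ‖g p.2‖) := by ring
    _ ≤ (√(1 + ‖p.1‖ ^ 2) ^ M * ‖f p.1‖) * (√(1 + ‖p.2‖ ^ 2) ^ N * ‖g p.2‖) := by
        gcongr
        all_goals exact one_le_sqrt_one_add_norm_sq _

end Integrability

lemma MvPolynomial.eval_sumElim {σ τ R : Type*} [Fintype σ] [Fintype τ] [CommSemiring R]
    (P : MvPolynomial (σ ⊕ τ) R) (x : σ → R) (y : τ → R) :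
    eval (Sum.elim x y) P =
      ∑ d ∈ P.support, P.coeff d * ((∏ i, x i ^ d (.inl i)) * ∏ j, y j ^ d (.inr j)) := by
  simp only [eval_eq', Fintype.prod_sum_type, Sum.elim_inl, Sum.elim_inr]

lemma MvPolynomial.IsHomogeneous.sum_inl_add_sum_inr {σ τ R : Type*} [Fintype σ] [Fintype τ]
    [CommSemiring R] {P : MvPolynomial (σ ⊕ τ) R} {m : ℕ} (hP : P.IsHomogeneous m)
    {d : σ ⊕ τ →₀ ℕ} (hd : d ∈ P.support) :
    ∑ i, d (.inl i) + ∑ j, d (.inr j) = m := by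
  rw [← Fintype.sum_sum_type, ← Finsupp.degree_eq_sum, Finsupp.degree_eq_weight_one]
  exact hP (mem_support_iff.mp hd)

noncomputable def sqDistPoly (ι R : Type*) [Fintype ι] [CommRing R] : MvPolynomial (ι ⊕ ι) R :=
  ∑ i, (X (.inl i) - X (.inr i)) ^ 2

lemma isHomogeneous_sqDistPoly (ι R : Type*) [Fintype ι] [CommRing R] :
    (sqDistPoly ι R).IsHomogeneous 2 :=
  IsHomogeneous.sum _ _ _ fun _ _ => ((isHomogeneous_X R _).sub (isHomogeneous_X R _)).pow 2

lemma eval_sqDistPoly {ι : Type*} [Fintype ι] (x y : EuclideanSpace ℝ ι) :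
    eval (Sum.elim (fun i => (x i : ℂ)) fun i => (y i : ℂ)) (sqDistPoly ι ℂ) =
      (‖x - y‖ ^ 2 : ℝ) := by
  rw [EuclideanSpace.norm_eq, Real.sq_sqrt (by positivity)]
  simp [sqDistPoly]

lemma ofReal_norm_sub_pow_eq_sum {ι : Type*} [Fintype ι] (l : ℕ) (x y : EuclideanSpace ℝ ι) :
    ((‖x - y‖ ^ (2 * l) : ℝ) : ℂ) =
      ∑ d ∈ (sqDistPoly ι ℂ ^ l).support, (sqDistPoly ι ℂ ^ l).coeff d *
        ((∏ i, (x i : ℂ) ^ d (.inl i)) * ∏ j, (y j : ℂ) ^ d (.inr j)) := by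
  rw [← eval_sumElim, map_pow, eval_sqDistPoly, pow_mul]
  push_cast; rfl

theorem integral_sum_mul_prod_eq_zero {α β ι 𝕜 : Type*} [RCLike 𝕜] [MeasurableSpace α]
    [MeasurableSpace β] {μ : Measure α} {ν : Measure β} [SFinite μ] [SFinite ν]
    (s : Finset ι) (c : ι → 𝕜) (u : ι → α → 𝕜) (v : ι → β → 𝕜)
    (hu : ∀ i ∈ s, Integrable (u i) μ) (hv : ∀ i ∈ s, Integrable (v i) ν)
    (hzero : ∀ i ∈ s, ∫ x, u i x ∂μ = 0 ∨ ∫ y, v i y ∂ν = 0) :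
    ∫ z, ∑ i ∈ s, c i * (u i z.1 * v i z.2) ∂μ.prod ν = 0 := by
  rw [integral_finsetSum _ fun i hi => ((hu i hi).mul_prod (hv i hi)).const_mul (c i)]
  refine Finset.sum_eq_zero fun i hi => ?_
  rw [integral_const_mul, integral_prod_mul]
  rcases hzero i hi with h | h <;> simp [h]

theorem vanishing_moments_orthogonality_general
    (n l a b : ℕ) (hlab : 2 * l + 1 ≤ a + b)
    (f g : EuclideanSpace ℝ (Fin n) → ℂ)
    (hfm : Measurable f) (hgm : Measurable g)
    (hf : Integrable (fun x : EuclideanSpace ℝ (Fin n) =>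
      (Real.sqrt (1 + ‖x‖^2) ^ (max (2 * l) (a - 1))) • f x))
    (hg : Integrable (fun x : EuclideanSpace ℝ (Fin n) =>
      (Real.sqrt (1 + ‖x‖^2) ^ (max (2 * l) (b - 1))) • g x))
    (hfmom : ∀ α : Fin n → ℕ, (∑ i, α i) + 1 ≤ a →
      ∫ x : EuclideanSpace ℝ (Fin n), (∏ i, (x i : ℂ) ^ α i) * f x = 0)
    (hgmom : ∀ β : Fin n → ℕ, (∑ i, β i) + 1 ≤ b →
      ∫ x : EuclideanSpace ℝ (Fin n), (∏ i, (x i : ℂ) ^ β i) * g x = 0) :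
    Integrable (fun p : EuclideanSpace ℝ (Fin n) × EuclideanSpace ℝ (Fin n) =>
      ‖p.1 - p.2‖ ^ (2 * l) * ‖f p.1‖ * ‖g p.2‖) ∧
    ∫ p : EuclideanSpace ℝ (Fin n) × EuclideanSpace ℝ (Fin n),
      ((‖p.1 - p.2‖ ^ (2 * l) : ℝ) : ℂ) * f p.1 * g p.2 = 0 := by
  refine ⟨integrable_norm_sub_pow_mul_norm_mul_norm (le_max_left _ _) (le_max_left _ _) hf hg
    hfm.aestronglyMeasurable hgm.aestronglyMeasurable, ?_⟩
  set P := sqDistPoly (Fin n) ℂ ^ l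
  have hP : P.IsHomogeneous (2 * l) := (isHomogeneous_sqDistPoly _ _).pow l
  have hsplit (x y : EuclideanSpace ℝ (Fin n)) :
      ((‖x - y‖ ^ (2 * l) : ℝ) : ℂ) * f x * g y = ∑ d ∈ P.support, P.coeff d *
        (((∏ i, (x i : ℂ) ^ d (.inl i)) * f x) * ((∏ j, (y j : ℂ) ^ d (.inr j)) * g y)) := by
    rw [ofReal_norm_sub_pow_eq_sum, Finset.sum_mul, Finset.sum_mul]
    exact Finset.sum_congr rfl fun d _ => by ring
  simp_rw [hsplit, Measure.volume_eq_prod]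
  refine integral_sum_mul_prod_eq_zero P.support P.coeff
    (fun d x => (∏ i, (x i : ℂ) ^ d (.inl i)) * f x)
    (fun d y => (∏ j, (y j : ℂ) ^ d (.inr j)) * g y)
    (fun d hd => integrable_prod_pow_mul hf hfm.aestronglyMeasurable
      (le_max_of_le_left (by have := hP.sum_inl_add_sum_inr hd; omega)))
    (fun d hd => integrable_prod_pow_mul hg hgm.aestronglyMeasurable
      (le_max_of_le_left (by have := hP.sum_inl_add_sum_inr hd; omega))) fun d hd => ?_
  have hdeg := hP.sum_inl_add_sum_inr hd
  by_cases ha : ∑ i, d (.inl i) + 1 ≤ a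
  · exact .inl (hfmom _ ha)
  · exact .inr (hgmom _ (by omega))

/-- Orthogonality lemma (Lemma 5.1): if `f` has vanishing moments of order
    `< a`, `g` has vanishing moments of order `< b`, and `2l ≤ a + b - 1`,
    then `∫∫ |x-y|^{2l} f(x) g(y) dx dy = 0`. -/
theorem vanishing_moments_orthogonality
    (n l a b : ℕ) (hn : 1 ≤ n) (hlab : 2 * l + 1 ≤ a + b)
    (f g : EuclideanSpace ℝ (Fin n) → ℂ)
    (hfm : Measurable f) (hgm : Measurable g)
    (hf : Integrable (fun x : EuclideanSpace ℝ (Fin n) =>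
      (Real.sqrt (1 + ‖x‖^2) ^ (max (2 * l) (a - 1))) • f x))
    (hg : Integrable (fun x : EuclideanSpace ℝ (Fin n) =>
      (Real.sqrt (1 + ‖x‖^2) ^ (max (2 * l) (b - 1))) • g x))
    (hfmom : ∀ α : Fin n → ℕ, (∑ i, α i) + 1 ≤ a →
      ∫ x : EuclideanSpace ℝ (Fin n), (∏ i, (x i : ℂ) ^ α i) * f x = 0)
    (hgmom : ∀ β : Fin n → ℕ, (∑ i, β i) + 1 ≤ b →
      ∫ x : EuclideanSpace ℝ (Fin n), (∏ i, (x i : ℂ) ^ β i) * g x = 0) :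
    Integrable (fun p : EuclideanSpace ℝ (Fin n) × EuclideanSpace ℝ (Fin n) =>
      ‖p.1 - p.2‖ ^ (2 * l) * ‖f p.1‖ * ‖g p.2‖) ∧
    ∫ p : EuclideanSpace ℝ (Fin n) × EuclideanSpace ℝ (Fin n),
      ((‖p.1 - p.2‖ ^ (2 * l) : ℝ) : ℂ) * f p.1 * g p.2 = 0 :=
  vanishing_moments_orthogonality_general n l a b hlab f g hfm hgm hf hg hfmom hgmom
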